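/- The function ψ(x) = (x(x² - α²)e^{-x²/(4α²)} - √(2π)·α³·e^{x²/(4α²)}·erf(x/(√2 α)))/(x² - α²) is not square integrable on ℝ: its L² norm diverges due to its growth at infinity. -/

import Mathlib

/-!
For `x ≥ √2 α` the Gaussian-damped term of the numerator is at most `x (x² - α²)`, while
`erf (x / (√2 α)) ≥ erf 1 > 0`, so `ψ x ≤ x - C e^{x²/(4α²)} / x²` with `C > 0`. The exponential
beats every power, hence `ψ x ≤ -1` on a half-line. A half-line has infinite Lebesgue measure,
whereas `{ψ² ≥ 1}` has finite measure when `ψ²` is integrable.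
-/

open MeasureTheory

noncomputable section

/-- The error function erf(z) = (2/√π)∫₀ᶻ e^{-t²} dt. -/
def erf (z : ℝ) : ℝ := 2 / Real.sqrt Real.pi * ∫ t in (0:ℝ)..z, Real.exp (-t ^ 2)

open Filter Real Set

theorem erf_monotoneOn : MonotoneOn erf (Ici 0) := by
  intro a ha b _ hab
  refine mul_le_mul_of_nonneg_left ?_ (by positivity)
  exact intervalIntegral.integral_mono_interval le_rfl ha hab
    (Eventually.of_forall fun t => (exp_pos _).le)
    ((by fun_prop : Continuous fun t : ℝ => exp (-t ^ 2)).intervalIntegrable _ _)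

theorem erf_pos {z : ℝ} (hz : 0 < z) : 0 < erf z :=
  mul_pos (by positivity) <| intervalIntegral.intervalIntegral_pos_of_pos_on
    ((by fun_prop : Continuous fun t : ℝ => exp (-t ^ 2)).intervalIntegrable _ _)
    (fun _ _ => exp_pos _) hz

theorem not_integrable_of_eventually_const_le {f : ℝ → ℝ} {c : ℝ} (hc : 0 < c)
    (hf : ∀ᶠ x in atTop, c ≤ f x) : ¬ Integrable f := by
  intro hint
  obtain ⟨M, hM⟩ := eventually_atTop.mp hf
  have hfin : volume (Ici M) < ⊤ :=
    (measure_mono fun x hx => hM x hx).trans_lt (hint.measure_ge_lt_top hc)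
  simp [volume_Ici] at hfin

theorem tendsto_exp_sq_div_const_div_pow_atTop {a : ℝ} (ha : 0 < a) (n : ℕ) :
    Tendsto (fun x => exp (x ^ 2 / a) / x ^ n) atTop atTop := by
  refine tendsto_atTop_mono' atTop ?_ (tendsto_exp_div_pow_atTop n)
  filter_upwards [eventually_ge_atTop a] with x hx
  have hx0 : 0 < x := ha.trans_le hx
  have : x ≤ x ^ 2 / a := by rw [le_div_iff₀ ha]; nlinarith
  gcongr

def groundStateCandidate (α x : ℝ) : ℝ :=
  (x * (x ^ 2 - α ^ 2) * Real.exp (-x ^ 2 / (4 * α ^ 2))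
        - Real.sqrt (2 * Real.pi) * α ^ 3 * Real.exp (x ^ 2 / (4 * α ^ 2))
          * erf (x / (Real.sqrt 2 * α))) / (x ^ 2 - α ^ 2)

theorem groundStateCandidate_le {α x : ℝ} (hα : 0 < α) (hx : √2 * α ≤ x) :
    groundStateCandidate α x ≤
      x - √(2 * π) * α ^ 3 * erf 1 * exp (x ^ 2 / (4 * α ^ 2)) / x ^ 2 := by
  have hαx : α < x := lt_of_lt_of_le (by nlinarith [one_lt_sqrt_two]) hx
  have hD : 0 < x ^ 2 - α ^ 2 := by nlinarith
  have hdecay : exp (-x ^ 2 / (4 * α ^ 2)) ≤ 1 := exp_le_one_iff.mpr (by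
    rw [neg_div, neg_nonpos]; positivity)
  have hx1 : 1 ≤ x / (√2 * α) := (one_le_div (by positivity)).mpr hx
  have herf : erf 1 ≤ erf (x / (√2 * α)) :=
    erf_monotoneOn (mem_Ici.mpr zero_le_one) (mem_Ici.mpr (zero_le_one.trans hx1)) hx1
  calc groundStateCandidate α x
      ≤ (x * (x ^ 2 - α ^ 2) - √(2 * π) * α ^ 3 * erf 1 * exp (x ^ 2 / (4 * α ^ 2)))
          / (x ^ 2 - α ^ 2) := by
        unfold groundStateCandidate
        gcongr ?_ / _
        have hdamped : x * (x ^ 2 - α ^ 2) * exp (-x ^ 2 / (4 * α ^ 2)) ≤ x * (x ^ 2 - α ^ 2) :=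
          mul_le_of_le_one_right (mul_pos (hα.trans hαx) hD).le hdecay
        have hgrowing : √(2 * π) * α ^ 3 * erf 1 * exp (x ^ 2 / (4 * α ^ 2)) ≤
            √(2 * π) * α ^ 3 * exp (x ^ 2 / (4 * α ^ 2)) * erf (x / (√2 * α)) := by
          rw [mul_right_comm]; gcongr
        linarith
    _ = x - √(2 * π) * α ^ 3 * erf 1 * exp (x ^ 2 / (4 * α ^ 2)) / (x ^ 2 - α ^ 2) := by
        field_simp
    _ ≤ x - √(2 * π) * α ^ 3 * erf 1 * exp (x ^ 2 / (4 * α ^ 2)) / x ^ 2 := by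
        have := erf_pos one_pos
        gcongr; nlinarith

theorem eventually_groundStateCandidate_le_neg_one {α : ℝ} (hα : 0 < α) :
    ∀ᶠ x in atTop, groundStateCandidate α x ≤ -1 := by
  set K := √(2 * π) * α ^ 3 * erf 1
  have hK : 0 < K := by have := erf_pos one_pos; positivity
  have hgrowth := tendsto_exp_sq_div_const_div_pow_atTop (a := 4 * α ^ 2) (by positivity) 3
  filter_upwards [hgrowth.eventually_ge_atTop (2 / K), eventually_ge_atTop (max 1 (√2 * α))]
    with x hgrowth hx
  have hx1 : 1 ≤ x := le_of_max_le_left hx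
  rw [div_le_div_iff₀ hK (by positivity)] at hgrowth
  have hdominant : x + 1 ≤ K * exp (x ^ 2 / (4 * α ^ 2)) / x ^ 2 := by
    rw [le_div_iff₀ (by positivity)]; nlinarith
  linarith [groundStateCandidate_le hα (le_of_max_le_right hx)]

/-- the function
ψ(x) = (x(x²-α²)e^{-x²/(4α²)} - √(2π)α³ e^{x²/(4α²)} erf(x/(√2α)))/(x²-α²)
is not square integrable on ℝ (its L² norm diverges at infinity). -/
theorem candidate_ground_state_not_square_integrable
    (α : ℝ) (hα : 0 < α) (ψ : ℝ → ℝ)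
    (hψ : ∀ x, x ≠ α → x ≠ -α →
      ψ x = (x * (x ^ 2 - α ^ 2) * Real.exp (-x ^ 2 / (4 * α ^ 2))
        - Real.sqrt (2 * Real.pi) * α ^ 3 * Real.exp (x ^ 2 / (4 * α ^ 2))
          * erf (x / (Real.sqrt 2 * α))) / (x ^ 2 - α ^ 2)) :
    ¬ Integrable (fun x => ψ x ^ 2) (volume : Measure ℝ) := by
  have hψ_eq : ∀ᶠ x in atTop, ψ x = groundStateCandidate α x := by
    filter_upwards [eventually_gt_atTop α] with x hx
    exact hψ x hx.ne' (by linarith)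
  refine not_integrable_of_eventually_const_le one_pos ?_
  filter_upwards [hψ_eq, eventually_groundStateCandidate_le_neg_one hα] with x hx hle
  rw [hx]
  nlinarith

end
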